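/- (Proposition 1) In the Mussa–Rosen model with the fixed-market-share collusive scheme, grim-trigger punishment and common discount factor δ ∈ (0,1), suppose all noncollusive margins m_k = p_k^* − c_k are positive and Δ = p_1^c − p_1^* > 0. Then for any two firms i, j ∈ {1,…,n} with j ≠ i, if p_i^* − c_i > p_j^* − c_j, then the critical discount factors satisfy δ̄_i < δ̄_j, where δ̄_k = ((1/4)Δ)/((1/4)Δ + m_k) = (π_k^d − π_k^c)/(π_k^d − π_k^*); consequently firm i has the strictly weaker incentive constraint: whenever Ω_j ≡ π_j^c − (1−δ)π_j^d − δπ_j^* ≥ 0, one also has Ω_i ≡ π_i^c − (1−δ)π_i^d − δπ_i^* > 0. -/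

import Mathlib

/-!
Each firm's demand is affine in its own price, with slope `-a_k < 0`, and depends on the
rivals' prices only through price differences. Writing `m_k = p_k^* - c_k`, the Nash,
collusive and deviation profits are therefore `a_k m_k²`, `a_k m_k (m_k + Δ)` and
`a_k (m_k + Δ/2)²`. Hence `δ̄_k = (Δ/4) / (Δ/4 + m_k)`, which is strictly decreasing in the
margin, and `Ω_k = a_k Δ (Δ/4 + m_k) (δ - δ̄_k)`, so `Ω_j ≥ 0` gives `δ ≥ δ̄_j > δ̄_i`.
-/

/-- Per-period profit of firm `k` in the `n`-firm Mussa–Rosen model at the price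
vector `p` (qualities `v`, unit costs `c`, taste support `[θlo, θhi]`). -/
noncomputable def profitMR (n : ℕ) (v c : ℕ → ℝ) (θlo θhi : ℝ) (p : ℕ → ℝ) (k : ℕ) : ℝ :=
  if k = 1 then (p 1 - c 1) * ((p 2 - p 1) / (v 2 - v 1) - θlo)
  else if k = n then (p n - c n) * (θhi - (p n - p (n - 1)) / (v n - v (n - 1)))
  else (p k - c k) * ((p (k + 1) - p k) / (v (k + 1) - v k)
    - (p k - p (k - 1)) / (v k - v (k - 1)))

/-- Best-response price of firm `k` to the rival prices in the vector `p`. -/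
noncomputable def brMR (n : ℕ) (v c : ℕ → ℝ) (θlo θhi : ℝ) (p : ℕ → ℝ) (k : ℕ) : ℝ :=
  if k = 1 then (1/2) * (p 2 + c 1 - θlo * (v 2 - v 1))
  else if k = n then (1/2) * (p (n - 1) + c n + θhi * (v n - v (n - 1)))
  else (1/2) * (p (k - 1) * (v (k + 1) - v k) + p (k + 1) * (v k - v (k - 1)))
    / (v (k + 1) - v (k - 1)) + (1/2) * c k

noncomputable def criticalDiscount (Δ m : ℝ) : ℝ := (1/4 * Δ) / (1/4 * Δ + m)

lemma criticalDiscount_lt_criticalDiscount {Δ m m' : ℝ} (hΔ : 0 < Δ) (hm' : 0 ≤ m')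
    (h : m' < m) : criticalDiscount Δ m < criticalDiscount Δ m' :=
  div_lt_div_of_pos_left (by positivity) (by positivity) (by linarith)

lemma deviation_gain_div_punishment_loss (a m Δ : ℝ) (ha : a ≠ 0) (hΔ : Δ ≠ 0)
    (hm : 1/4 * Δ + m ≠ 0) :
    (a * (m + Δ/2)^2 - a * (m * (m + Δ))) / (a * (m + Δ/2)^2 - a * m^2)
      = criticalDiscount Δ m := by
  have hden : a * (m + Δ/2)^2 - a * m^2 = a * Δ * (1/4 * Δ + m) := by ring
  rw [criticalDiscount, hden, div_eq_div_iff (mul_ne_zero (mul_ne_zero ha hΔ) hm) hm]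
  ring

lemma incentive_slack_eq (a m Δ δ : ℝ) (hm : 1/4 * Δ + m ≠ 0) :
    a * (m * (m + Δ)) - (1 - δ) * (a * (m + Δ/2)^2) - δ * (a * m^2)
      = a * Δ * (1/4 * Δ + m) * (δ - criticalDiscount Δ m) := by
  rw [criticalDiscount, mul_sub, mul_assoc (a * Δ) _ (_ / _), mul_div_cancel₀ _ hm]
  ring

section IncentiveSlack

variable {a m Δ : ℝ} (δ : ℝ)

lemma incentive_slack_nonneg_iff (ha : 0 < a) (hΔ : 0 < Δ) (hm : 0 < 1/4 * Δ + m) :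
    0 ≤ a * (m * (m + Δ)) - (1 - δ) * (a * (m + Δ/2)^2) - δ * (a * m^2)
      ↔ criticalDiscount Δ m ≤ δ := by
  rw [incentive_slack_eq a m Δ δ hm.ne', mul_nonneg_iff_of_pos_left (by positivity), sub_nonneg]

lemma incentive_slack_pos_iff (ha : 0 < a) (hΔ : 0 < Δ) (hm : 0 < 1/4 * Δ + m) :
    0 < a * (m * (m + Δ)) - (1 - δ) * (a * (m + Δ/2)^2) - δ * (a * m^2)
      ↔ criticalDiscount Δ m < δ := by
  rw [incentive_slack_eq a m Δ δ hm.ne', mul_pos_iff_of_pos_left (by positivity), sub_pos]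

end IncentiveSlack

noncomputable def demandSlopeMR (n : ℕ) (v : ℕ → ℝ) (k : ℕ) : ℝ :=
  if k = 1 then 1 / (v 2 - v 1)
  else if k = n then 1 / (v n - v (n - 1))
  else (v (k + 1) - v (k - 1)) / ((v (k + 1) - v k) * (v k - v (k - 1)))

section Model

variable {n : ℕ} {v c : ℕ → ℝ} {θlo θhi : ℝ}

lemma quality_gap_above_pos (hv : ∀ k, 1 ≤ k → k < n → v k < v (k + 1))
    {k : ℕ} (hk1 : 1 ≤ k) (hkn : k < n) : 0 < v (k + 1) - v k :=
  sub_pos.2 (hv k hk1 hkn)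

lemma quality_gap_below_pos (hv : ∀ k, 1 ≤ k → k < n → v k < v (k + 1))
    {k : ℕ} (hk2 : 2 ≤ k) (hkn : k ≤ n) : 0 < v k - v (k - 1) := by
  obtain ⟨k, rfl⟩ : ∃ l, k = l + 1 := ⟨k - 1, by omega⟩
  simpa using quality_gap_above_pos hv (k := k) (by omega) (by omega)

lemma quality_gaps_pos (hv : ∀ k, 1 ≤ k → k < n → v k < v (k + 1))
    {k : ℕ} (hk2 : 2 ≤ k) (hkn : k < n) :
    0 < v (k + 1) - v k ∧ 0 < v k - v (k - 1) ∧ 0 < v (k + 1) - v (k - 1) := by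
  have habove := quality_gap_above_pos hv (by omega) hkn
  have hbelow := quality_gap_below_pos hv hk2 hkn.le
  exact ⟨habove, hbelow, by linarith⟩

lemma demandSlopeMR_pos (hn : 2 ≤ n) (hv : ∀ k, 1 ≤ k → k < n → v k < v (k + 1))
    {k : ℕ} (hk1 : 1 ≤ k) (hkn : k ≤ n) : 0 < demandSlopeMR n v k := by
  unfold demandSlopeMR
  split_ifs with h1 hn'
  · subst h1; have := quality_gap_above_pos hv le_rfl (by omega : 1 < n); positivity
  · have := quality_gap_below_pos hv (by omega : 2 ≤ k) hkn; subst hn'; positivity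
  · obtain ⟨_, _, _⟩ := quality_gaps_pos hv (k := k) (by omega) (by omega)
    positivity

/-- Firm `k`'s demand is `demandSlopeMR` times the distance of its own price from
`2 * brMR - c k`, the price at which demand vanishes. -/
lemma profitMR_eq (hn : 2 ≤ n) (hv : ∀ k, 1 ≤ k → k < n → v k < v (k + 1))
    (p : ℕ → ℝ) {k : ℕ} (hk1 : 1 ≤ k) (hkn : k ≤ n) :
    profitMR n v c θlo θhi p k
      = demandSlopeMR n v k * (p k - c k) * (2 * brMR n v c θlo θhi p k - c k - p k) := by
  unfold profitMR brMR demandSlopeMR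
  split_ifs with h1 hn'
  · subst h1; have := quality_gap_above_pos hv le_rfl (by omega : 1 < n)
    field_simp; ring
  · have := quality_gap_below_pos hv (by omega : 2 ≤ k) hkn; subst hn'
    field_simp; ring
  · obtain ⟨_, _, _⟩ := quality_gaps_pos hv (k := k) (by omega) (by omega)
    field_simp; ring

lemma brMR_update_self (p : ℕ → ℝ) {k : ℕ} (hk1 : 1 ≤ k) (x : ℝ) :
    brMR n v c θlo θhi (Function.update p k x) k = brMR n v c θlo θhi p k := by
  unfold brMR
  split_ifs with h1 hn'
  · subst h1; rw [Function.update_of_ne (by norm_num)]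
  · subst hn'; rw [Function.update_of_ne (by omega)]
  · rw [Function.update_of_ne (by omega), Function.update_of_ne (by omega)]

lemma brMR_add_const (hv : ∀ k, 1 ≤ k → k < n → v k < v (k + 1))
    (p : ℕ → ℝ) {k : ℕ} (hk1 : 1 ≤ k) (hkn : k ≤ n) (Δ : ℝ) :
    brMR n v c θlo θhi (fun i ↦ p i + Δ) k = brMR n v c θlo θhi p k + Δ / 2 := by
  unfold brMR
  split_ifs with h1 hn'
  · ring
  · ring
  · obtain ⟨_, _, _⟩ := quality_gaps_pos hv (k := k) (by omega) (by omega)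
    field_simp; ring

section Profits

variable {pstar : ℕ → ℝ} (hn : 2 ≤ n)
  (hv : ∀ k, 1 ≤ k → k < n → v k < v (k + 1)) {k : ℕ} (hk1 : 1 ≤ k) (hkn : k ≤ n)
include hn hv hk1 hkn

lemma profitMR_nash (hnash : pstar k = brMR n v c θlo θhi pstar k) :
    profitMR n v c θlo θhi pstar k = demandSlopeMR n v k * (pstar k - c k)^2 := by
  rw [profitMR_eq hn hv pstar hk1 hkn, ← hnash]
  ring

lemma profitMR_collusive (hnash : pstar k = brMR n v c θlo θhi pstar k) {Δ : ℝ} :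
    profitMR n v c θlo θhi (fun i ↦ pstar i + Δ) k
      = demandSlopeMR n v k * ((pstar k - c k) * (pstar k - c k + Δ)) := by
  rw [profitMR_eq hn hv _ hk1 hkn, brMR_add_const hv pstar hk1 hkn, ← hnash]
  ring

lemma profitMR_deviation (hnash : pstar k = brMR n v c θlo θhi pstar k) {Δ : ℝ} :
    profitMR n v c θlo θhi (Function.update (fun i ↦ pstar i + Δ) k
        (brMR n v c θlo θhi (fun i ↦ pstar i + Δ) k)) k
      = demandSlopeMR n v k * (pstar k - c k + Δ/2)^2 := by
  rw [profitMR_eq hn hv _ hk1 hkn, brMR_update_self _ hk1,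
    Function.update_self, brMR_add_const hv pstar hk1 hkn, ← hnash]
  ring

end Profits

end Model

theorem prop1_cartel_stability_general
    (n : ℕ) (hn : 3 ≤ n) (v c pstar pc : ℕ → ℝ) (θlo θhi : ℝ)
    (hvmono : ∀ k, 1 ≤ k → k < n → v k < v (k + 1))
    (hnash : ∀ k, 1 ≤ k → k ≤ n → pstar k = brMR n v c θlo θhi pstar k)
    (Δ : ℝ) (hΔ : 0 < Δ)
    (hpc : ∀ k, pc k = pstar k + Δ)
    (hmargins : ∀ k, 1 ≤ k → k ≤ n → 0 < pstar k - c k)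
    (i j : ℕ) (hi1 : 1 ≤ i) (hin : i ≤ n) (hj1 : 1 ≤ j) (hjn : j ≤ n)
    (hmargin : pstar j - c j < pstar i - c i) :
    (∀ k, 1 ≤ k → k ≤ n →
      (profitMR n v c θlo θhi (Function.update pc k (brMR n v c θlo θhi pc k)) k
          - profitMR n v c θlo θhi pc k)
        / (profitMR n v c θlo θhi (Function.update pc k (brMR n v c θlo θhi pc k)) k
          - profitMR n v c θlo θhi pstar k)
      = ((1/4) * Δ) / ((1/4) * Δ + (pstar k - c k)))
    ∧ ((1/4) * Δ) / ((1/4) * Δ + (pstar i - c i))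
        < ((1/4) * Δ) / ((1/4) * Δ + (pstar j - c j))
    ∧ (∀ δ : ℝ, 0 < δ → δ < 1 →
        profitMR n v c θlo θhi pc j
            - (1 - δ) * profitMR n v c θlo θhi
                (Function.update pc j (brMR n v c θlo θhi pc j)) j
            - δ * profitMR n v c θlo θhi pstar j ≥ 0 →
        profitMR n v c θlo θhi pc i
            - (1 - δ) * profitMR n v c θlo θhi
                (Function.update pc i (brMR n v c θlo θhi pc i)) i
            - δ * profitMR n v c θlo θhi pstar i > 0) := by
  have hn2 : 2 ≤ n := by omega
  obtain rfl : pc = fun k ↦ pstar k + Δ := funext hpc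
  have profits k (hk1 : 1 ≤ k) (hkn : k ≤ n) :=
    And.intro (profitMR_nash hn2 hvmono hk1 hkn (hnash k hk1 hkn)) <|
      And.intro (profitMR_collusive hn2 hvmono hk1 hkn (hnash k hk1 hkn) (Δ := Δ))
        (profitMR_deviation hn2 hvmono hk1 hkn (hnash k hk1 hkn) (Δ := Δ))
  have hslope k (hk1 : 1 ≤ k) (hkn : k ≤ n) := demandSlopeMR_pos hn2 hvmono hk1 hkn
  have hcrit : criticalDiscount Δ (pstar i - c i) < criticalDiscount Δ (pstar j - c j) :=
    criticalDiscount_lt_criticalDiscount hΔ (hmargins j hj1 hjn).le hmargin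
  refine ⟨fun k hk1 hkn ↦ ?_, hcrit, fun δ _ _ hΩj ↦ ?_⟩
  · obtain ⟨hπ, hπc, hπd⟩ := profits k hk1 hkn
    rw [hπ, hπc, hπd]
    exact deviation_gain_div_punishment_loss _ _ _ (hslope k hk1 hkn).ne' hΔ.ne'
      (by linarith [hmargins k hk1 hkn])
  · obtain ⟨hπj, hπcj, hπdj⟩ := profits j hj1 hjn
    obtain ⟨hπi, hπci, hπdi⟩ := profits i hi1 hin
    rw [hπj, hπcj, hπdj] at hΩj
    rw [hπi, hπci, hπdi]
    have hδj := (incentive_slack_nonneg_iff δ (hslope j hj1 hjn) hΔ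
      (by linarith [hmargins j hj1 hjn])).1 hΩj
    exact (incentive_slack_pos_iff δ (hslope i hi1 hin) hΔ
      (by linarith [hmargins i hi1 hin])).2 (hcrit.trans_le hδj)

/-- (Proposition 1) Mussa–Rosen model, fixed-market-share collusive scheme,
grim-trigger punishment, common discount factor `δ ∈ (0,1)`: if all noncollusive
margins are positive and `Δ = p_1^c − p_1^* > 0`, then for firms `i ≠ j` with
`p_i^* − c_i > p_j^* − c_j` the critical discount factors
`δ̄_k = ((1/4)Δ)/((1/4)Δ + m_k) = (π_k^d − π_k^c)/(π_k^d − π_k^*)` satisfy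
`δ̄_i < δ̄_j`; consequently `Ω_j ≥ 0` implies `Ω_i > 0`. -/
theorem prop1_cartel_stability
    (n : ℕ) (hn : 3 ≤ n) (v c pstar pc : ℕ → ℝ) (θlo θhi : ℝ)
    (hθ0 : 0 < θlo) (hθ : θlo < θhi)
    (hv1 : 0 < v 1) (hvmono : ∀ k, 1 ≤ k → k < n → v k < v (k + 1))
    (hcpos : ∀ k, 1 ≤ k → k ≤ n → 0 < c k)
    (hnash : ∀ k, 1 ≤ k → k ≤ n → pstar k = brMR n v c θlo θhi pstar k)
    (Δ : ℝ) (hΔ : 0 < Δ) (hΔdef : Δ = pc 1 - pstar 1)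
    (hpc : ∀ k, pc k = pstar k + Δ)
    (hmargins : ∀ k, 1 ≤ k → k ≤ n → 0 < pstar k - c k)
    (i j : ℕ) (hi1 : 1 ≤ i) (hin : i ≤ n) (hj1 : 1 ≤ j) (hjn : j ≤ n) (hji : j ≠ i)
    (hmargin : pstar j - c j < pstar i - c i) :
    (∀ k, 1 ≤ k → k ≤ n →
      (profitMR n v c θlo θhi (Function.update pc k (brMR n v c θlo θhi pc k)) k
          - profitMR n v c θlo θhi pc k)
        / (profitMR n v c θlo θhi (Function.update pc k (brMR n v c θlo θhi pc k)) k
          - profitMR n v c θlo θhi pstar k)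
      = ((1/4) * Δ) / ((1/4) * Δ + (pstar k - c k)))
    ∧ ((1/4) * Δ) / ((1/4) * Δ + (pstar i - c i))
        < ((1/4) * Δ) / ((1/4) * Δ + (pstar j - c j))
    ∧ (∀ δ : ℝ, 0 < δ → δ < 1 →
        profitMR n v c θlo θhi pc j
            - (1 - δ) * profitMR n v c θlo θhi
                (Function.update pc j (brMR n v c θlo θhi pc j)) j
            - δ * profitMR n v c θlo θhi pstar j ≥ 0 →
        profitMR n v c θlo θhi pc i
            - (1 - δ) * profitMR n v c θlo θhi
                (Function.update pc i (brMR n v c θlo θhi pc i)) i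
            - δ * profitMR n v c θlo θhi pstar i > 0) :=
  prop1_cartel_stability_general n hn v c pstar pc θlo θhi hvmono hnash Δ hΔ hpc hmargins i j hi1
    hin hj1 hjn hmargin
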